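/- Let (u_i, v_i) be defined by u_1 = 2, v_1 = 1, u_{i+1} = 2u_i + 3v_i, v_{i+1} = u_i + 2v_i (so u_i² − 3v_i² = 1). Let A_i = (2u_i + 4, 6v_i) and B = (8, 0). Then the distance from the origin O to A_i equals 4u_i + 2, the distance from A_i to B equals 4u_i − 2, and the quadrilateral O A_i B A_{i+1} has perimeter 8(u_i + u_{i+1}) and area 24(v_{i+1} − v_i), and these are equal; hence O A_i B A_{i+1} is an equable lattice quadrilateral which is tangential (OA_i − A_iB + BA_{i+1} − A_{i+1}O = 0). -/

import Mathlib

/-!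
The recurrence `(u, v) ↦ (2u + 3v, u + 2v)` is multiplication by the fundamental unit
`2 + √3`, so it preserves `u² - 3v²`; running it back one step gives `(u₀, v₀) = (1, 0)`,
hence every `(u_i, v_i)` solves the Pell equation. For such a solution
`(2u + 4)² + (6v)² = (4u + 2)²` and `(2u - 4)² + (6v)² = (4u - 2)²`, so `A_i` lies on the
branch `OA - AB = 4` of a hyperbola with foci `O` and `B`; this difference cancelling
between `A_i` and `A_{i+1}` is the tangential condition. With `O` at the origin and `B` on
the first axis the shoelace area is `4 (y_{i+1} - y_i)`, and `3 (v_{i+1} - v_i) = u_i + u_{i+1}`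
makes it equal to the perimeter.
-/

/-- Shoelace (signed) area of the quadrilateral with vertices `P`, `Q`, `R`, `S`. -/
noncomputable def quadArea (P Q R S : EuclideanSpace ℝ (Fin 2)) : ℝ :=
  ((P 0 * Q 1 - Q 0 * P 1) + (Q 0 * R 1 - R 0 * Q 1) +
   (R 0 * S 1 - S 0 * R 1) + (S 0 * P 1 - P 0 * S 1)) / 2

theorem pell_form_step {R : Type*} [CommRing R] (u v : R) :
    (2 * u + 3 * v) ^ 2 - 3 * (u + 2 * v) ^ 2 = u ^ 2 - 3 * v ^ 2 := by
  ring

section PellRecurrence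

variable {u v : ℕ → ℤ} (hu : ∀ i, u (i + 1) = 2 * u i + 3 * v i)
  (hv : ∀ i, v (i + 1) = u i + 2 * v i)
include hu hv

theorem pell_recurrence_zero (hu1 : u 1 = 2) (hv1 : v 1 = 1) : u 0 = 1 ∧ v 0 = 0 := by
  have h0 := hu 0
  have h1 := hv 0
  rw [hu1] at h0
  rw [hv1] at h1
  omega

theorem pell_recurrence_sq_sub (h0 : u 0 ^ 2 - 3 * v 0 ^ 2 = 1) (i : ℕ) :
    u i ^ 2 - 3 * v i ^ 2 = 1 := by
  induction i with
  | zero => exact h0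
  | succ i ih => rw [hu, hv, pell_form_step, ih]

theorem pell_recurrence_nonneg (hu0 : 0 ≤ u 0) (hv0 : 0 ≤ v 0) (i : ℕ) : 0 ≤ u i ∧ 0 ≤ v i := by
  induction i with
  | zero => exact ⟨hu0, hv0⟩
  | succ i ih => rw [hu, hv]; omega

end PellRecurrence

theorem dist_toLp_two (a b c d : ℝ) :
    dist !₂[a, b] !₂[c, d] = √((a - c) ^ 2 + (b - d) ^ 2) := by
  rw [EuclideanSpace.dist_eq, Fin.sum_univ_two]
  simp [Real.dist_eq, sq_abs]

section PellDist

variable {u v : ℝ} (hpell : u ^ 2 - 3 * v ^ 2 = 1) (hu : 0 ≤ u)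
include hpell hu

theorem pell_dist_origin : dist !₂[0, 0] !₂[2 * u + 4, 6 * v] = 4 * u + 2 := by
  rw [dist_toLp_two, ← Real.sqrt_sq (show 0 ≤ 4 * u + 2 by linarith)]
  congr 1
  linear_combination (-12 : ℝ) * hpell

theorem pell_dist_eight : dist !₂[2 * u + 4, 6 * v] !₂[8, 0] = 4 * u - 2 := by
  rw [dist_toLp_two, ← Real.sqrt_sq (show 0 ≤ 4 * u - 2 by nlinarith [sq_nonneg v])]
  congr 1
  linear_combination (-12 : ℝ) * hpell

end PellDist

theorem quadArea_origin_eight (a b c d : ℝ) :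
    quadArea !₂[0, 0] !₂[a, b] !₂[8, 0] !₂[c, d] = 4 * (d - b) := by
  simp only [quadArea, Matrix.cons_val_zero, Matrix.cons_val_one]
  ring

theorem stmt8_general (u v : ℕ → ℤ)
    (hu1 : u 1 = 2) (hv1 : v 1 = 1)
    (hu : ∀ i, u (i + 1) = 2 * u i + 3 * v i)
    (hv : ∀ i, v (i + 1) = u i + 2 * v i)
    (A : ℕ → EuclideanSpace ℝ (Fin 2))
    (hA : ∀ i, A i = !₂[2 * (u i : ℝ) + 4, 6 * (v i : ℝ)])
    (O B : EuclideanSpace ℝ (Fin 2))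
    (hO : O = !₂[0, 0]) (hB : B = !₂[8, 0])
    (i : ℕ) :
    dist O (A i) = 4 * (u i : ℝ) + 2 ∧
    dist (A i) B = 4 * (u i : ℝ) - 2 ∧
    dist O (A i) + dist (A i) B + dist B (A (i + 1)) + dist (A (i + 1)) O
      = 8 * ((u i : ℝ) + (u (i + 1) : ℝ)) ∧
    quadArea O (A i) B (A (i + 1)) = 24 * ((v (i + 1) : ℝ) - (v i : ℝ)) ∧
    quadArea O (A i) B (A (i + 1)) =
      dist O (A i) + dist (A i) B + dist B (A (i + 1)) + dist (A (i + 1)) O ∧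
    dist O (A i) - dist (A i) B + dist B (A (i + 1)) - dist (A (i + 1)) O = 0 := by
  obtain ⟨hu0, hv0⟩ := pell_recurrence_zero hu hv hu1 hv1
  have hpell (j : ℕ) : (u j : ℝ) ^ 2 - 3 * (v j : ℝ) ^ 2 = 1 := by
    exact_mod_cast pell_recurrence_sq_sub hu hv (by simp [hu0, hv0]) j
  have hu_nonneg (j : ℕ) : (0 : ℝ) ≤ u j := by
    exact_mod_cast (pell_recurrence_nonneg hu hv (by simp [hu0]) hv0.ge j).1
  have hOA (j : ℕ) : dist O (A j) = 4 * (u j : ℝ) + 2 := by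
    rw [hO, hA]; exact pell_dist_origin (hpell j) (hu_nonneg j)
  have hAB (j : ℕ) : dist (A j) B = 4 * (u j : ℝ) - 2 := by
    rw [hB, hA]; exact pell_dist_eight (hpell j) (hu_nonneg j)
  have harea : quadArea O (A i) B (A (i + 1)) = 24 * ((v (i + 1) : ℝ) - (v i : ℝ)) := by
    rw [hO, hA, hB, hA, quadArea_origin_eight]; ring
  have hstep : (v (i + 1) : ℝ) - v i = (u i + u (i + 1)) / 3 := by
    rw [hu, hv]; push_cast; ring
  rw [dist_comm B (A (i + 1)), dist_comm (A (i + 1)) O, hOA, hAB, hOA, hAB, harea, hstep]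
  refine ⟨rfl, rfl, ?_, rfl, ?_, ?_⟩ <;> ring

/-- For the Pell solutions `(u_i, v_i)` of `u² - 3v² = 1` with `(u_1, v_1) = (2, 1)` and
`A_i = (2u_i + 4, 6v_i)`, `B = (8, 0)`, `O = (0,0)`: `dist O A_i = 4u_i + 2`,
`dist A_i B = 4u_i - 2`, the quadrilateral `O A_i B A_{i+1}` has perimeter
`8(u_i + u_{i+1})`, area `24(v_{i+1} - v_i)`, these are equal (equable), and it is
tangential: `OA_i - A_iB + BA_{i+1} - A_{i+1}O = 0`. -/
theorem stmt8 (u v : ℕ → ℤ)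
    (hu1 : u 1 = 2) (hv1 : v 1 = 1)
    (hu : ∀ i, u (i + 1) = 2 * u i + 3 * v i)
    (hv : ∀ i, v (i + 1) = u i + 2 * v i)
    (A : ℕ → EuclideanSpace ℝ (Fin 2))
    (hA : ∀ i, A i = !₂[2 * (u i : ℝ) + 4, 6 * (v i : ℝ)])
    (O B : EuclideanSpace ℝ (Fin 2))
    (hO : O = !₂[0, 0]) (hB : B = !₂[8, 0])
    (i : ℕ) (hi : 1 ≤ i) :
    dist O (A i) = 4 * (u i : ℝ) + 2 ∧
    dist (A i) B = 4 * (u i : ℝ) - 2 ∧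
    dist O (A i) + dist (A i) B + dist B (A (i + 1)) + dist (A (i + 1)) O
      = 8 * ((u i : ℝ) + (u (i + 1) : ℝ)) ∧
    quadArea O (A i) B (A (i + 1)) = 24 * ((v (i + 1) : ℝ) - (v i : ℝ)) ∧
    quadArea O (A i) B (A (i + 1)) =
      dist O (A i) + dist (A i) B + dist B (A (i + 1)) + dist (A (i + 1)) O ∧
    dist O (A i) - dist (A i) B + dist B (A (i + 1)) - dist (A (i + 1)) O = 0 :=
  stmt8_general u v hu1 hv1 hu hv A hA O B hO hB i
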